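/- arXiv:2106.15742 — 7 statements merged into one kernel-verified Lean document; each statement's English description precedes it below -/
import Mathlib

section
/- Let V(x) = xᵀK⁻¹x/2 with K a positive definite symmetric d×d real matrix, and let b(x) = Ax for a real d×d matrix A. Then div(b e^{-V}) = 0 on ℝ^d if and only if A = JK⁻¹ for some antisymmetric matrix J. -/
/-!
By the product rule, `div(e^{-V} b)(x) = e^{-V(x)} (tr A - ⟪K⁻¹x, Ax⟫)`. Setting `x = 0` forces
`tr A = 0`, so the condition says that the quadratic form of `K⁻¹A` vanishes, i.e. `K⁻¹A` is
antisymmetric; by congruence with `K` this is the same as `AK` being antisymmetric. Conversely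
`tr A = tr(K · K⁻¹A) = 0` because the trace of a symmetric times an antisymmetric matrix vanishes.
-/

open Matrix

/-- The divergence of a vector field `F : ℝ^d → ℝ^d`. -/
noncomputable def diverg {d : ℕ} (F : (Fin d → ℝ) → (Fin d → ℝ)) (x : Fin d → ℝ) : ℝ :=
  ∑ i : Fin d, fderiv ℝ F x (Pi.single i 1) i

namespace Matrix

variable {n R : Type*} [Fintype n] [CommRing R]

theorem IsSymm.mulVec_dotProduct_mulVec {M : Matrix n n R} (hM : M.IsSymm) (A : Matrix n n R)
    (x : n → R) : (M *ᵥ x) ⬝ᵥ (A *ᵥ x) = x ⬝ᵥ (M * A) *ᵥ x := by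
  rw [← mulVec_mulVec, dotProduct_mulVec x M, ← mulVec_transpose, hM.eq]

theorem exists_transpose_eq_neg_and_eq_mul_iff [DecidableEq n] {M : Matrix n n R}
    (hM : M.IsSymm) (hMu : IsUnit M) (A : Matrix n n R) :
    (∃ J : Matrix n n R, Jᵀ = -J ∧ A = J * M) ↔ (M * A)ᵀ = -(M * A) := by
  have hdet : IsUnit M.det := (isUnit_iff_isUnit_det M).mp hMu
  constructor
  · rintro ⟨J, hJ, rfl⟩
    rw [transpose_mul, transpose_mul, hJ, hM.eq, Matrix.mul_neg, Matrix.neg_mul, Matrix.mul_assoc]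
  · intro hMA
    refine ⟨A * M⁻¹, ?_, by rw [Matrix.mul_assoc, nonsing_inv_mul _ hdet, Matrix.mul_one]⟩
    calc (A * M⁻¹)ᵀ = M⁻¹ * (M * A)ᵀ * M⁻¹ := by
          rw [transpose_mul, transpose_mul, hM.inv.eq, hM.eq, Matrix.mul_assoc,
            mul_nonsing_inv_cancel_right _ _ hdet]
      _ = -(A * M⁻¹) := by
          rw [hMA, Matrix.mul_neg, Matrix.neg_mul, nonsing_inv_mul_cancel_left _ _ hdet]

variable [NoZeroDivisors R] [CharZero R]

theorem IsSymm.trace_mul_eq_zero_of_transpose_eq_neg {S J : Matrix n n R} (hS : S.IsSymm)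
    (hJ : Jᵀ = -J) : (S * J).trace = 0 := by
  rw [← CharZero.eq_neg_self_iff]
  calc (S * J).trace = (S * J)ᵀ.trace := (trace_transpose _).symm
    _ = -(S * J).trace := by rw [transpose_mul, hJ, hS.eq, Matrix.neg_mul, trace_neg, trace_mul_comm]

theorem transpose_eq_neg_iff_forall_dotProduct_mulVec_self [DecidableEq n] {N : Matrix n n R} :
    Nᵀ = -N ↔ ∀ x : n → R, x ⬝ᵥ N *ᵥ x = 0 := by
  have hentry (i j : n) : Pi.single i 1 ⬝ᵥ N *ᵥ Pi.single j 1 = N i j := by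
    simp [mulVec_single]
  constructor
  · intro hN x
    rw [← CharZero.eq_neg_self_iff]
    calc x ⬝ᵥ N *ᵥ x = x ᵥ* N ⬝ᵥ x := dotProduct_mulVec _ _ _
      _ = -(x ⬝ᵥ N *ᵥ x) := by
        rw [← mulVec_transpose, hN, neg_mulVec, neg_dotProduct, dotProduct_comm]
  · intro h
    ext i j
    have hii := h (Pi.single i 1)
    have hjj := h (Pi.single j 1)
    -- polarization at `eᵢ + eⱼ`
    have hij := h (Pi.single i 1 + Pi.single j 1)
    simp only [mulVec_add, dotProduct_add, add_dotProduct, hentry] at hii hjj hij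
    simp only [transpose_apply, neg_apply]
    linear_combination hij - hii - hjj

theorem forall_trace_sub_dotProduct_eq_zero_iff [DecidableEq n] {M : Matrix n n R}
    (hM : M.IsSymm) (hMu : IsUnit M) (A : Matrix n n R) :
    (∀ x : n → R, A.trace - (M *ᵥ x) ⬝ᵥ (A *ᵥ x) = 0) ↔ (M * A)ᵀ = -(M * A) := by
  simp_rw [hM.mulVec_dotProduct_mulVec, transpose_eq_neg_iff_forall_dotProduct_mulVec_self]
  constructor
  · intro h x
    have htrace : A.trace = 0 := by simpa using h 0
    simpa [htrace] using h x
  · intro h x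
    have htrace : A.trace = 0 := by
      rw [← nonsing_inv_mul_cancel_left (A := M) A ((isUnit_iff_isUnit_det M).mp hMu)]
      exact hM.inv.trace_mul_eq_zero_of_transpose_eq_neg
        (transpose_eq_neg_iff_forall_dotProduct_mulVec_self.mpr h)
    rw [htrace, h x, sub_zero]

end Matrix

section QuadraticForm

variable {n : Type*} [Fintype n]

theorem differentiable_dotProduct_mulVec_self (M : Matrix n n ℝ) :
    Differentiable ℝ (fun y : n → ℝ => y ⬝ᵥ M *ᵥ y) := by
  unfold dotProduct mulVec dotProduct
  fun_prop

theorem fderiv_dotProduct_mulVec_self_apply (M : Matrix n n ℝ) (x v : n → ℝ) :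
    fderiv ℝ (fun y => y ⬝ᵥ M *ᵥ y) x v = x ⬝ᵥ M *ᵥ v + v ⬝ᵥ M *ᵥ x := by
  classical
  let B := (Matrix.toLinearMap₂' ℝ (S₁ := ℝ) (S₂ := ℝ) M).toContinuousBilinearMap
  have hB : (fun y : n → ℝ => y ⬝ᵥ M *ᵥ y) = fun y => B y y := by
    funext y; simp [B, Matrix.toLinearMap₂'_apply']
  have hBd : HasFDerivAt (fun y => B y y)
      (B.precompR _ x (.id ℝ _) + B.precompL _ (.id ℝ _) x) x :=
    B.hasFDerivAt_of_bilinear (hasFDerivAt_id x) (hasFDerivAt_id x)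
  rw [hB, hBd.fderiv]
  simp [B, Matrix.toLinearMap₂'_apply']

theorem hasFDerivAt_exp_neg_half_dotProduct_mulVec_self (M : Matrix n n ℝ)
    (x : n → ℝ) :
    HasFDerivAt (fun y => Real.exp (-(y ⬝ᵥ M *ᵥ y) / 2))
      ((-Real.exp (-(x ⬝ᵥ M *ᵥ x) / 2) / 2) • fderiv ℝ (fun y => y ⬝ᵥ M *ᵥ y) x) x := by
  have hexp : HasDerivAt (fun t => Real.exp (-t / 2)) (-Real.exp (-(x ⬝ᵥ M *ᵥ x) / 2) / 2)
      (x ⬝ᵥ M *ᵥ x) := by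
    simpa [neg_div, div_eq_mul_inv] using ((hasDerivAt_neg _).div_const 2).exp
  exact hexp.comp_hasFDerivAt x (differentiable_dotProduct_mulVec_self M x).hasFDerivAt

end QuadraticForm

section Divergence

variable {d : ℕ}

theorem diverg_smul {f : (Fin d → ℝ) → ℝ} {F : (Fin d → ℝ) → Fin d → ℝ} {x : Fin d → ℝ}
    (hf : DifferentiableAt ℝ f x) (hF : DifferentiableAt ℝ F x) :
    diverg (fun y => f y • F y) x = f x * diverg F x + fderiv ℝ f x (F x) := by
  have hFx : F x = ∑ i, F x i • Pi.single i 1 := by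
    ext j; simp [Finset.sum_apply, Pi.single_apply]
  rw [diverg, diverg, fderiv_fun_smul hf hF, Finset.mul_sum]
  conv_rhs => rw [hFx, map_sum]
  simp [Finset.sum_add_distrib, mul_comm]

theorem diverg_mulVec (A : Matrix (Fin d) (Fin d) ℝ) (x : Fin d → ℝ) :
    diverg (fun y => A *ᵥ y) x = A.trace := by
  have hA : HasFDerivAt (fun y => A *ᵥ y) A.mulVecLin.toContinuousLinearMap x :=
    A.mulVecLin.toContinuousLinearMap.hasFDerivAt
  rw [diverg, hA.fderiv]
  simp [mulVec_single, trace]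

theorem diverg_exp_neg_half_smul_mulVec {M : Matrix (Fin d) (Fin d) ℝ} (hM : M.IsSymm)
    (A : Matrix (Fin d) (Fin d) ℝ) (x : Fin d → ℝ) :
    diverg (fun y => Real.exp (-(y ⬝ᵥ M *ᵥ y) / 2) • (A *ᵥ y)) x =
      Real.exp (-(x ⬝ᵥ M *ᵥ x) / 2) * (A.trace - (M *ᵥ x) ⬝ᵥ (A *ᵥ x)) := by
  have hf := hasFDerivAt_exp_neg_half_dotProduct_mulVec_self M x
  have hF : DifferentiableAt ℝ (fun y => A *ᵥ y) x :=
    A.mulVecLin.toContinuousLinearMap.differentiableAt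
  have hsymm : x ⬝ᵥ M *ᵥ (A *ᵥ x) = (M *ᵥ x) ⬝ᵥ (A *ᵥ x) := by
    rw [dotProduct_mulVec, ← mulVec_transpose, hM.eq]
  rw [diverg_smul hf.differentiableAt hF, diverg_mulVec, hf.fderiv,
    _root_.smul_apply, fderiv_dotProduct_mulVec_self_apply, hsymm,
    dotProduct_comm (A *ᵥ x), smul_eq_mul]
  ring

end Divergence

/-- For `V(x) = xᵀK⁻¹x/2` with `K` symmetric positive definite and `b(x) = Ax`,
`div(b e^{-V}) = 0` on `ℝ^d` iff `A = J K⁻¹` for some antisymmetric `J`. -/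
theorem divergence_free_iff_antisymmetric {d : ℕ}
    (K : Matrix (Fin d) (Fin d) ℝ) (hK : K.PosDef) (A : Matrix (Fin d) (Fin d) ℝ) :
    (∀ x : Fin d → ℝ,
        diverg (fun x => Real.exp (-(x ⬝ᵥ (K⁻¹ *ᵥ x)) / 2) • (A *ᵥ x)) x = 0) ↔
      ∃ J : Matrix (Fin d) (Fin d) ℝ, Jᵀ = -J ∧ A = J * K⁻¹ := by
  have hsymm : K⁻¹.IsSymm := (isHermitian_iff_isSymm.mp hK.isHermitian).inv
  have hunit : IsUnit K⁻¹ := isUnit_nonsing_inv_iff.mpr hK.isUnit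
  simp_rw [diverg_exp_neg_half_smul_mulVec hsymm, mul_eq_zero, Real.exp_ne_zero, false_or]
  rw [forall_trace_sub_dotProduct_eq_zero_iff hsymm hunit,
    exists_transpose_eq_neg_and_eq_mul_iff hsymm hunit]
end

section
/- Let K be a symmetric positive definite d×d real matrix, D symmetric positive semidefinite, J antisymmetric, and C = (D+J)K⁻¹. If every eigenvalue of C has positive real part, then the only C-invariant subspace of ker(D) that is invariant under Cᵀ is the trivial subspace {0}. (Hypoellipticity of the associated Fokker-Planck equation.) -/
/-!
For `x` in a `Cᵀ`-invariant subspace `W ⊆ ker D`, the Lyapunov identity `CK + KCᵀ = 2D`, which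
follows from `C = (D + J)K⁻¹`, gives `x* (CK + KCᵀ) x = 0`. After complexifying `W`, `Cᵀ` has an
eigenvector `x ∈ W_ℂ`, `Cᵀx = μx`, and then `x* (CK + KCᵀ) x = 2 Re μ · x* K x`. Since `x* K x > 0`,
`Re μ = 0`; but `μ` is an eigenvalue of `C`, contradicting positive stability unless `W = 0`.
-/

open Matrix

namespace Module.End

theorem exists_hasEigenvector_mem_of_mem_invtSubmodule {K V : Type*} [Field K] [IsAlgClosed K]
    [AddCommGroup V] [Module K V] [FiniteDimensional K V] {f : End K V} {W : Submodule K V}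
    (hW : W ∈ f.invtSubmodule) (hne : W ≠ ⊥) : ∃ μ, ∃ x ∈ W, f.HasEigenvector μ x := by
  have : Nontrivial W := Submodule.nontrivial_iff_ne_bot.mpr hne
  obtain ⟨μ, hμ⟩ := exists_eigenvalue (f.restrict hW)
  obtain ⟨x, hx⟩ := hμ.exists_hasEigenvector
  refine ⟨μ, x, x.2, hasEigenvector_iff.mpr ⟨?_, ?_⟩⟩
  · exact mem_eigenspace_iff.mpr (congrArg Subtype.val hx.apply_eq_smul)
  · simpa using hx.2

end Module.End

open scoped ComplexOrder

namespace Matrix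

theorem conjTranspose_map_ofReal {m n : Type*} (A : Matrix m n ℝ) :
    (A.map Complex.ofReal)ᴴ = Aᵀ.map Complex.ofReal := by
  rw [← conjTranspose_map _ fun r ↦ (Complex.conj_ofReal r).symm,
    conjTranspose_eq_transpose_of_trivial]

variable {n : Type*} [Fintype n]

theorem spectrum_transpose [DecidableEq n] {R : Type*} [CommRing R] (A : Matrix n n R) :
    spectrum R Aᵀ = spectrum R A := by
  ext r
  rw [spectrum.mem_iff, spectrum.mem_iff, ← isUnit_transpose, transpose_sub,
    algebraMap_eq_diagonal, diagonal_transpose, transpose_transpose]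

theorem mul_add_mul_transpose_eq_two_smul {R : Type*} [CommRing R] {C K D J : Matrix n n R}
    (hK : K.IsSymm) (hD : D.IsSymm) (hJ : Jᵀ = -J) (hCK : C * K = D + J) :
    C * K + K * Cᵀ = 2 • D := by
  have hKC : K * Cᵀ = D - J := by
    conv_lhs => rw [← hK.eq, ← transpose_mul, hCK]
    rw [transpose_add, hD.eq, hJ, sub_eq_add_neg]
  rw [hCK, hKC, two_smul]
  abel

theorem re_eq_zero_of_conjTranspose_mulVec_eq_smul {𝕜 : Type*} [RCLike 𝕜] {C K : Matrix n n 𝕜}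
    (hK : K.PosDef) {x : n → 𝕜} {μ : 𝕜} (hx : x ≠ 0) (hCx : Cᴴ *ᵥ x = μ • x)
    (hCK : (C * K + K * Cᴴ) *ᵥ x = 0) : RCLike.re μ = 0 := by
  have hxC : star x ᵥ* C = star (μ • x) := by
    rw [← hCx, star_mulVec, conjTranspose_conjTranspose]
  have hquad : star x ⬝ᵥ (C * K + K * Cᴴ) *ᵥ x = (star μ + μ) * (star x ⬝ᵥ K *ᵥ x) := by
    rw [add_mulVec, ← mulVec_mulVec, ← mulVec_mulVec, hCx, dotProduct_add,
      dotProduct_mulVec (star x) C, hxC, mulVec_smul, dotProduct_smul, star_smul,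
      smul_dotProduct, smul_eq_mul, smul_eq_mul, add_mul]
  rw [hCK, dotProduct_zero] at hquad
  have hsum : star μ + μ = 0 :=
    (mul_eq_zero.mp hquad.symm).resolve_right (hK.dotProduct_mulVec_pos hx).ne'
  have hre := congrArg RCLike.re hsum
  simp only [RCLike.star_def, map_add, RCLike.conj_re, map_zero] at hre
  linarith

theorem map_ofReal_mul_add_mul_transpose (C K : Matrix n n ℝ) :
    (C * K + K * Cᵀ).map Complex.ofReal =
      C.map Complex.ofReal * K.map Complex.ofReal +
        K.map Complex.ofReal * (C.map Complex.ofReal)ᴴ := by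
  have hmul (A B : Matrix n n ℝ) :
      (A * B).map Complex.ofReal = A.map Complex.ofReal * B.map Complex.ofReal :=
    Matrix.map_mul (f := Complex.ofRealHom)
  rw [Matrix.map_add _ Complex.ofReal_add, hmul, hmul, conjTranspose_map_ofReal]

theorem re_star_dotProduct_map_ofReal_mulVec (K : Matrix n n ℝ) (x : n → ℂ) :
    (star x ⬝ᵥ K.map Complex.ofReal *ᵥ x).re =
      (fun i ↦ (x i).re) ⬝ᵥ K *ᵥ (fun i ↦ (x i).re) +
        (fun i ↦ (x i).im) ⬝ᵥ K *ᵥ (fun i ↦ (x i).im) := by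
  simp only [dotProduct, mulVec, Complex.re_sum, ← Finset.sum_add_distrib, Finset.mul_sum]
  refine Finset.sum_congr rfl fun i _ ↦ Finset.sum_congr rfl fun j _ ↦ ?_
  simp

theorem PosDef.map_ofReal {K : Matrix n n ℝ} (hK : K.PosDef) : (K.map Complex.ofReal).PosDef := by
  have hherm : (K.map Complex.ofReal).IsHermitian := by
    rw [IsHermitian, conjTranspose_map_ofReal, (isHermitian_iff_isSymm.mp hK.isHermitian).eq]
  refine .of_dotProduct_mulVec_pos hherm fun x hx ↦ Complex.pos_iff.mpr ⟨?_, ?_⟩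
  · have hpos {u : n → ℝ} (hu : u ≠ 0) : 0 < u ⬝ᵥ K *ᵥ u := by
      simpa using hK.dotProduct_mulVec_pos hu
    have hnonneg (u : n → ℝ) : 0 ≤ u ⬝ᵥ K *ᵥ u := by
      simpa using hK.posSemidef.dotProduct_mulVec_nonneg u
    rw [re_star_dotProduct_map_ofReal_mulVec]
    by_cases hre : (fun i ↦ (x i).re) = 0
    · have him : (fun i ↦ (x i).im) ≠ 0 := by
        contrapose! hx
        funext i
        exact Complex.ext (congrFun hre i) (congrFun hx i)
      exact add_pos_of_nonneg_of_pos (hnonneg _) (hpos him)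
    · exact add_pos_of_pos_of_nonneg (hpos hre) (hnonneg _)
  · exact (hherm.im_star_dotProduct_mulVec_self x).symm

end Matrix

namespace Submodule

variable {n : Type*}

def complexification (W : Submodule ℝ (n → ℝ)) : Submodule ℂ (n → ℂ) :=
  span ℂ ((fun (v : n → ℝ) i ↦ (v i : ℂ)) '' W)

theorem complexification_ne_bot {W : Submodule ℝ (n → ℝ)} (hW : W ≠ ⊥) :
    W.complexification ≠ ⊥ := by
  obtain ⟨w, hw, hw0⟩ := W.ne_bot_iff.mp hW
  refine (Submodule.ne_bot_iff _).mpr ⟨fun i ↦ (w i : ℂ), subset_span ⟨w, hw, rfl⟩, ?_⟩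
  contrapose! hw0
  ext i
  simpa using congrFun hw0 i

theorem complexification_bot : (⊥ : Submodule ℝ (n → ℝ)).complexification = ⊥ := by
  simp [complexification, Pi.zero_def]

theorem map_ofReal_mulVec_mem_complexification [Fintype n] {m : Type*} {M : Matrix m n ℝ}
    {W : Submodule ℝ (n → ℝ)} {W' : Submodule ℝ (m → ℝ)} (h : ∀ v ∈ W, M *ᵥ v ∈ W')
    {z : n → ℂ} (hz : z ∈ W.complexification) :
    M.map Complex.ofReal *ᵥ z ∈ W'.complexification := by
  refine (span_le (p := W'.complexification.comap (M.map Complex.ofReal).mulVecLin)).mpr ?_ hz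
  rintro _ ⟨v, hv, rfl⟩
  refine subset_span ⟨M *ᵥ v, h v hv, ?_⟩
  ext i
  exact RingHom.map_mulVec Complex.ofRealHom M v i

end Submodule

open Module.End Submodule in
/-- Hypoellipticity: if `C = (D+J)K⁻¹` is positive stable (all complex eigenvalues have
positive real part), with `K` symmetric positive definite, `D` symmetric positive
semidefinite and `J` antisymmetric, then the only subspace of `ker D` invariant
under `Cᵀ` is the trivial subspace. -/
theorem hypoelliptic_of_positive_stable {d : ℕ}
    (K D J : Matrix (Fin d) (Fin d) ℝ) (hK : K.PosDef) (hD : D.PosSemidef)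
    (hJ : Jᵀ = -J) (C : Matrix (Fin d) (Fin d) ℝ) (hC : C = (D + J) * K⁻¹)
    (hstable : ∀ μ ∈ spectrum ℂ (C.map (Complex.ofReal)), 0 < μ.re) :
    ∀ W : Submodule ℝ (Fin d → ℝ),
      (∀ x ∈ W, D *ᵥ x = 0) → (∀ x ∈ W, Cᵀ *ᵥ x ∈ W) → W = ⊥ := by
  intro W hker hinv
  by_contra hW
  have hlyap : C * K + K * Cᵀ = 2 • D :=
    mul_add_mul_transpose_eq_two_smul (isHermitian_iff_isSymm.mp hK.isHermitian)
      (isHermitian_iff_isSymm.mp hD.isHermitian) hJ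
      (by rw [hC, nonsing_inv_mul_cancel_right _ _ ((isUnit_iff_isUnit_det K).mp hK.isUnit)])
  have hinvc : W.complexification ∈ invtSubmodule (C.map Complex.ofReal)ᴴ.toLin' := fun z hz ↦ by
    simpa [conjTranspose_map_ofReal] using map_ofReal_mulVec_mem_complexification hinv hz
  obtain ⟨μ, x, hxW, hx⟩ :=
    exists_hasEigenvector_mem_of_mem_invtSubmodule hinvc (complexification_ne_bot hW)
  have hspec : μ ∈ spectrum ℂ (C.map Complex.ofReal) := by
    rw [← spectrum_transpose, ← transpose_map]
    simpa [spectrum_toLin', conjTranspose_map_ofReal] using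
      (hasEigenvalue_of_hasEigenvector hx).mem_spectrum
  have hlyapW : ∀ v ∈ W, (C * K + K * Cᵀ) *ᵥ v ∈ (⊥ : Submodule ℝ (Fin d → ℝ)) := fun v hv ↦ by
    rw [hlyap, smul_mulVec, hker v hv, smul_zero]
    exact zero_mem _
  have hlyapx := map_ofReal_mulVec_mem_complexification hlyapW hxW
  rw [complexification_bot, mem_bot, map_ofReal_mul_add_mul_transpose] at hlyapx
  exact (hstable μ hspec).ne' <| re_eq_zero_of_conjTranspose_mulVec_eq_smul hK.map_ofReal
    hx.2 hx.apply_eq_smul hlyapx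
end

section
/- Let D̃ be a symmetric positive semidefinite d×d real matrix. Then there exists an orthonormal basis ψ₁, ..., ψ_d of ℝ^d such that ⟨ψ_k, D̃ψ_k⟩ = Tr(D̃)/d for all k = 1, ..., d. -/
/-!
Shifting by `tr T / n` reduces the claim to a traceless operator `T`, for which we want an
orthonormal basis `b` with `⟪b i, T (b i)⟫ = 0`. The diagonal entries of `T` in any orthonormal
basis sum to `tr T = 0`, so one is `≤ 0` and another `≥ 0`; the intermediate value theorem along
the segment between the two basis vectors gives a unit vector `v` with `⟪v, T v⟫ = 0`. The
compression of `T` to `vᗮ` has trace `tr T - ⟪v, T v⟫ = 0`, and induction on the dimension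
completes `v` to the required basis.
-/

open Matrix Module

open scoped InnerProductSpace RealInnerProductSpace

namespace LinearMap

section Compression

variable {𝕜 E : Type*} [RCLike 𝕜] [NormedAddCommGroup E] [InnerProductSpace 𝕜 E]

noncomputable def compression (K : Submodule 𝕜 E) [K.HasOrthogonalProjection] (T : E →ₗ[𝕜] E) :
    K →ₗ[𝕜] K :=
  K.orthogonalProjectionOnto.toLinearMap ∘ₗ T ∘ₗ K.subtype

variable (K : Submodule 𝕜 E) [K.HasOrthogonalProjection] (T : E →ₗ[𝕜] E)

lemma inner_compression_right (x y : K) : ⟪x, compression K T y⟫_𝕜 = ⟪(x : E), T y⟫_𝕜 :=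
  K.inner_orthogonalProjectionOnto_eq_of_mem_left x (T y)

variable [FiniteDimensional 𝕜 E]

lemma trace_compression :
    trace 𝕜 K (compression K T) = trace 𝕜 E (K.starProjection.toLinearMap ∘ₗ T) :=
  trace_comp_comm' K.subtype (K.orthogonalProjectionOnto.toLinearMap ∘ₗ T)

lemma trace_compression_add_trace_compression_orthogonal :
    trace 𝕜 K (compression K T) + trace 𝕜 Kᗮ (compression Kᗮ T) = trace 𝕜 E T := by
  rw [trace_compression, trace_compression, ← map_add, ← add_comp,
    ← ContinuousLinearMap.toLinearMap_add,
    ← K.id_eq_sum_starProjection_self_orthogonalComplement]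
  rfl

lemma trace_compression_span_singleton {v : E} (hv : ‖v‖ = 1) :
    trace 𝕜 (𝕜 ∙ v) (compression (𝕜 ∙ v) T) = ⟪v, T v⟫_𝕜 := by
  have hproj : (𝕜 ∙ v).starProjection.toLinearMap ∘ₗ T = (innerₛₗ 𝕜 v ∘ₗ T).smulRight v := by
    ext w
    simp [Submodule.starProjection_singleton, hv]
  rw [trace_compression, hproj, trace_smulRight]
  rfl

end Compression

lemma orthonormal_cons_of_mem_orthogonal {𝕜 E : Type*} [RCLike 𝕜] [NormedAddCommGroup E]
    [InnerProductSpace 𝕜 E] {n : ℕ} {v : E} (hv : ‖v‖ = 1) {c : Fin n → (𝕜 ∙ v)ᗮ}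
    (hc : Orthonormal 𝕜 c) :
    Orthonormal 𝕜 (Fin.cons v (fun i ↦ (c i : E)) : Fin (n + 1) → E) := by
  have hvc (i : Fin n) : ⟪v, c i⟫_𝕜 = 0 :=
    Submodule.mem_orthogonal_singleton_iff_inner_right.mp (c i).2
  have hcv (i : Fin n) : ⟪(c i : E), v⟫_𝕜 = 0 := inner_eq_zero_symm.mp (hvc i)
  rw [orthonormal_iff_ite] at hc ⊢
  intro i j
  cases i using Fin.cases <;> cases j using Fin.cases <;>
    simp [hvc, hcv, hv, ← hc, ← Submodule.coe_inner, (Fin.succ_ne_zero _).symm]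

variable {F : Type*} [NormedAddCommGroup F] [InnerProductSpace ℝ F] [FiniteDimensional ℝ F]

lemma exists_norm_eq_one_inner_map_self_eq_zero (T : F →ₗ[ℝ] F) {x y : F} (hx : ‖x‖ = 1)
    (hy : ‖y‖ = 1) (hxy : 0 ≤ ⟪x, y⟫) (hTx : ⟪x, T x⟫ ≤ 0) (hTy : 0 ≤ ⟪y, T y⟫) :
    ∃ v, ‖v‖ = 1 ∧ ⟪v, T v⟫ = 0 := by
  set w : ℝ → F := fun t ↦ (1 - t) • x + t • y
  have hcont : Continuous fun t ↦ ⟪w t, T (w t)⟫ := by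
    have := T.continuous_of_finiteDimensional
    fun_prop
  obtain ⟨t, ⟨ht0, ht1⟩, hwt⟩ := intermediate_value_Icc zero_le_one hcont.continuousOn
    ⟨by simpa [w] using hTx, by simpa [w] using hTy⟩
  have hw : w t ≠ 0 := by
    have hxx : ⟪x, x⟫ = 1 := by rw [real_inner_self_eq_norm_sq, hx, one_pow]
    have hyy : ⟪y, y⟫ = 1 := by rw [real_inner_self_eq_norm_sq, hy, one_pow]
    have hww : ⟪w t, w t⟫ = (1 - t) ^ 2 + t ^ 2 + 2 * (t * (1 - t)) * ⟪x, y⟫ := by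
      simp only [w, inner_add_left, inner_add_right, real_inner_smul_left, real_inner_smul_right,
        hxx, hyy, real_inner_comm x y]
      ring
    rw [← inner_self_ne_zero (𝕜 := ℝ), hww]
    nlinarith [mul_nonneg (mul_nonneg ht0 (sub_nonneg.2 ht1)) hxy]
  refine ⟨‖w t‖⁻¹ • w t, norm_smul_inv_norm hw, ?_⟩
  simp only [map_smul, real_inner_smul_left, real_inner_smul_right, hwt, mul_zero]

lemma exists_norm_eq_one_inner_map_self_eq_zero_of_trace_eq_zero [Nontrivial F]
    {T : F →ₗ[ℝ] F} (htr : trace ℝ F T = 0) : ∃ v, ‖v‖ = 1 ∧ ⟪v, T v⟫ = 0 := by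
  set b := stdOrthonormalBasis ℝ F
  have hsum : ∑ i, ⟪b i, T (b i)⟫ = 0 := (trace_eq_sum_inner T b).symm.trans htr
  have hne : (Finset.univ : Finset (Fin (finrank ℝ F))).Nonempty := by
    rw [Finset.univ_nonempty_iff, ← Fin.pos_iff_nonempty]
    exact finrank_pos
  obtain ⟨i, -, hi⟩ := Finset.exists_le_of_sum_le hne (hsum.trans Finset.sum_const_zero.symm).le
  obtain ⟨j, -, hj⟩ := Finset.exists_le_of_sum_le hne (Finset.sum_const_zero.trans hsum.symm).le
  refine exists_norm_eq_one_inner_map_self_eq_zero T (b.orthonormal.1 i) (b.orthonormal.1 j) ?_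
    hi hj
  rw [orthonormal_iff_ite.mp b.orthonormal]
  split_ifs <;> norm_num

theorem exists_orthonormal_inner_map_self_eq_zero {n : ℕ} (hn : finrank ℝ F = n)
    {T : F →ₗ[ℝ] F} (htr : trace ℝ F T = 0) :
    ∃ b : Fin n → F, Orthonormal ℝ b ∧ ∀ i, ⟪b i, T (b i)⟫ = 0 := by
  induction n generalizing F with
  | zero => exact ⟨fun i ↦ i.elim0, orthonormal_iff_ite.mpr fun i ↦ i.elim0, fun i ↦ i.elim0⟩
  | succ n ih =>
    have : Nontrivial F := Module.nontrivial_of_finrank_eq_succ hn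
    obtain ⟨v, hv, hTv⟩ := exists_norm_eq_one_inner_map_self_eq_zero_of_trace_eq_zero htr
    have hK : finrank ℝ (ℝ ∙ v)ᗮ = n :=
      have : Fact (finrank ℝ F = n + 1) := ⟨hn⟩
      Submodule.finrank_orthogonal_span_singleton (norm_ne_zero_iff.mp (hv ▸ one_ne_zero))
    have hKtr : trace ℝ (ℝ ∙ v)ᗮ (compression (ℝ ∙ v)ᗮ T) = 0 := by
      have := trace_compression_add_trace_compression_orthogonal (ℝ ∙ v) T
      rwa [trace_compression_span_singleton T hv, hTv, htr, zero_add] at this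
    obtain ⟨c, hc, hcT⟩ := ih hK hKtr
    refine ⟨Fin.cons v (fun i ↦ (c i : F)), orthonormal_cons_of_mem_orthogonal hv hc, ?_⟩
    intro i
    cases i using Fin.cases with
    | zero => exact hTv
    | succ i => exact (inner_compression_right _ T (c i) (c i)).symm.trans (hcT i)

theorem exists_orthonormal_inner_map_self_eq_trace_div {n : ℕ} (hn : finrank ℝ F = n)
    (T : F →ₗ[ℝ] F) :
    ∃ b : Fin n → F, Orthonormal ℝ b ∧ ∀ i, ⟪b i, T (b i)⟫ = trace ℝ F T / n := by
  set c := trace ℝ F T / n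
  have hTc : trace ℝ F T = c * n := by
    obtain rfl | hn0 := eq_or_ne n 0
    · have := Module.finrank_zero_iff.mp hn
      simp [Subsingleton.elim T 0]
    · exact (div_mul_cancel₀ _ (Nat.cast_ne_zero.mpr hn0)).symm
  have htr : trace ℝ F (T - c • id) = 0 := by
    rw [map_sub, map_smul, trace_id, hn, hTc, smul_eq_mul, sub_self]
  obtain ⟨b, hb, hbT⟩ := exists_orthonormal_inner_map_self_eq_zero hn htr
  refine ⟨b, hb, fun i ↦ ?_⟩
  simpa [inner_sub_right, real_inner_smul_right, hb.1 i, sub_eq_zero] using hbT i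

end LinearMap

theorem exists_equidistributing_orthonormal_basis_general {d : ℕ}
    (D : Matrix (Fin d) (Fin d) ℝ) :
    ∃ ψ : Fin d → (Fin d → ℝ),
      (∀ j k, ψ j ⬝ᵥ ψ k = if j = k then 1 else 0) ∧
      (∀ k, ψ k ⬝ᵥ (D *ᵥ ψ k) = D.trace / d) := by
  obtain ⟨b, hb, hbD⟩ := LinearMap.exists_orthonormal_inner_map_self_eq_trace_div
    finrank_euclideanSpace_fin (toEuclideanLin D)
  have htr : LinearMap.trace ℝ _ (toEuclideanLin D) = D.trace :=
    trace_toLin_eq D (PiLp.basisFun 2 ℝ (Fin d))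
  refine ⟨fun k ↦ (b k).ofLp, fun j k ↦ ?_, fun k ↦ ?_⟩
  · simpa [EuclideanSpace.inner_eq_star_dotProduct, dotProduct_comm] using
      orthonormal_iff_ite.mp hb j k
  · simpa [EuclideanSpace.inner_eq_star_dotProduct, dotProduct_comm, htr] using hbD k

/-- For any symmetric positive semidefinite matrix `D̃` there is an orthonormal basis
`ψ₁, …, ψ_d` of `ℝ^d` with `⟨ψ_k, D̃ ψ_k⟩ = Tr(D̃)/d` for all `k`. -/
theorem exists_equidistributing_orthonormal_basis {d : ℕ}
    (D : Matrix (Fin d) (Fin d) ℝ) (hD : D.PosSemidef) :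
    ∃ ψ : Fin d → (Fin d → ℝ),
      (∀ j k, ψ j ⬝ᵥ ψ k = if j = k then 1 else 0) ∧
      (∀ k, ψ k ⬝ᵥ (D *ᵥ ψ k) = D.trace / d) :=
  exists_equidistributing_orthonormal_basis_general D
end

section
/- Let D̃ be a symmetric positive semidefinite d×d matrix, let ψ₁, ..., ψ_d be an orthonormal basis of ℝ^d with ⟨ψ_k, D̃ψ_k⟩ = Tr(D̃)/d for all k, and let 0 < λ₁ < ⋯ < λ_d be real numbers. Define Ĵ by Ĵ_{jk} = ((λ_j+λ_k)/(λ_j-λ_k))⟨ψ_j, D̃ψ_k⟩ for j ≠ k and Ĵ_{jj} = 0, set J̃ := Ψ Ĵ Ψᵀ where Ψ = [ψ₁,...,ψ_d], and Q := Ψ diag(λ₁,...,λ_d) Ψᵀ. Then Q is symmetric positive definite and satisfies the Lyapunov equation J̃Q − QJ̃ = −QD̃ − D̃Q + 2(Tr(D̃)/d)Q. -/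
/-!
Conjugation by the orthogonal matrix `Ψ` is a ⋆-algebra automorphism carrying `Λ = diag λ` to `Q`,
`Ĵ` to `J̃` and `M = Ψᵀ D̃ Ψ`, the matrix of `D̃` in the basis `ψ`, to `D̃`. So `Q` is positive
definite because `Λ` is, and the Lyapunov equation reduces to `ĴΛ − ΛĴ = −ΛM − MΛ + 2cΛ` with
`c = Tr D̃ / d`. Entrywise, off the diagonal the left side is `(λ_k − λ_j) Ĵ_{jk} = −(λ_j + λ_k) M_{jk}`,
and on the diagonal both sides vanish since `M_{kk} = c`.
-/

open Matrix

section

variable {n K : Type*} [DecidableEq n] [Field K]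

def jHat (lam : n → K) (M : Matrix n n K) : Matrix n n K :=
  of fun j k => if j = k then 0 else (lam j + lam k) / (lam j - lam k) * M j k

theorem jHat_mul_diagonal_sub_diagonal_mul_jHat [Fintype n] {lam : n → K} (hlam : Function.Injective lam)
    {M : Matrix n n K} {c : K} (hM : ∀ k, M k k = c) :
    jHat lam M * diagonal lam - diagonal lam * jHat lam M =
      -(diagonal lam * M) - M * diagonal lam + (2 * c) • diagonal lam := by
  ext j k
  simp only [Matrix.sub_apply, Matrix.add_apply, Matrix.neg_apply, Matrix.smul_apply, mul_diagonal,
    diagonal_mul, jHat, of_apply, diagonal_apply, smul_eq_mul]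
  by_cases hjk : j = k
  · subst hjk
    simp only [if_true, hM]
    ring
  · have : lam j - lam k ≠ 0 := sub_ne_zero.mpr (hlam.ne hjk)
    simp only [if_neg hjk]
    field_simp
    ring

end

theorem lyapunov_equation_for_Q_general {d : ℕ}
    (D : Matrix (Fin d) (Fin d) ℝ)
    (ψ : Fin d → (Fin d → ℝ))
    (hortho : ∀ j k, ψ j ⬝ᵥ ψ k = if j = k then 1 else 0)
    (hequi : ∀ k, ψ k ⬝ᵥ (D *ᵥ ψ k) = D.trace / d)
    (lam : Fin d → ℝ) (hpos : ∀ k, 0 < lam k) (hmono : StrictMono lam) :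
    letI Ψ : Matrix (Fin d) (Fin d) ℝ := Matrix.of fun i j => ψ j i
    letI Jhat : Matrix (Fin d) (Fin d) ℝ := Matrix.of fun j k =>
      if j = k then 0 else ((lam j + lam k) / (lam j - lam k)) * (ψ j ⬝ᵥ (D *ᵥ ψ k))
    letI Jtilde : Matrix (Fin d) (Fin d) ℝ := Ψ * Jhat * Ψᵀ
    letI Q : Matrix (Fin d) (Fin d) ℝ := Ψ * Matrix.diagonal lam * Ψᵀ
    Q.PosDef ∧
      Jtilde * Q - Q * Jtilde = -(Q * D) - D * Q + (2 * (D.trace / d)) • Q := by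
  set Ψ : Matrix (Fin d) (Fin d) ℝ := of fun i j => ψ j i
  have hΨ : Ψ ∈ unitary (Matrix (Fin d) (Fin d) ℝ) := by
    rw [← unitaryGroup, mem_unitaryGroup_iff', star_eq_conjTranspose,
      conjTranspose_eq_transpose_of_trivial]
    ext j k
    exact hortho j k
  set φ := Unitary.conjStarAlgAut ℝ _ ⟨Ψ, hΨ⟩
  have hφ (X : Matrix (Fin d) (Fin d) ℝ) : φ X = Ψ * X * Ψᵀ := by
    simp [φ, star_eq_conjTranspose, conjTranspose_eq_transpose_of_trivial]
  have hφ_symm (X : Matrix (Fin d) (Fin d) ℝ) : φ.symm X = Ψᵀ * X * Ψ := by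
    simp [φ, star_eq_conjTranspose, conjTranspose_eq_transpose_of_trivial]
  set M : Matrix (Fin d) (Fin d) ℝ := of fun j k => ψ j ⬝ᵥ (D *ᵥ ψ k)
  have hDM : φ M = D := by
    have hM : M = φ.symm D := by
      ext j k
      rw [hφ_symm]
      exact (mul_mul_apply Ψᵀ D Ψ j k).symm
    rw [hM, StarAlgEquiv.apply_symm_apply]
  constructor
  · rw [← hφ, Unitary.conjStarAlgAut_apply]
    exact (IsUnit.posDef_star_right_conjugate_iff Unitary.isUnit_coe).mpr
      (posDef_diagonal_iff.mpr hpos)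
  · have key := congrArg φ
      (jHat_mul_diagonal_sub_diagonal_mul_jHat hmono.injective (M := M) hequi)
    simp only [map_sub, map_mul, map_neg, map_add, map_smul, hDM] at key
    simp only [hφ] at key
    exact key

/-- Given a symmetric positive semidefinite `D̃`, an orthonormal basis `ψ` equidistributing
its trace, and `0 < λ₁ < ⋯ < λ_d`, the matrix `Q = Ψ diag(λ) Ψᵀ` is symmetric positive
definite and satisfies the Lyapunov equation
`J̃Q − QJ̃ = −QD̃ − D̃Q + 2 (Tr D̃ / d) Q`, where `J̃ = Ψ Ĵ Ψᵀ` and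
`Ĵ_{jk} = ((λ_j+λ_k)/(λ_j−λ_k)) ⟨ψ_j, D̃ψ_k⟩` off the diagonal. -/
theorem lyapunov_equation_for_Q {d : ℕ}
    (D : Matrix (Fin d) (Fin d) ℝ) (hD : D.PosSemidef)
    (ψ : Fin d → (Fin d → ℝ))
    (hortho : ∀ j k, ψ j ⬝ᵥ ψ k = if j = k then 1 else 0)
    (hequi : ∀ k, ψ k ⬝ᵥ (D *ᵥ ψ k) = D.trace / d)
    (lam : Fin d → ℝ) (hpos : ∀ k, 0 < lam k) (hmono : StrictMono lam) :
    letI Ψ : Matrix (Fin d) (Fin d) ℝ := Matrix.of fun i j => ψ j i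
    letI Jhat : Matrix (Fin d) (Fin d) ℝ := Matrix.of fun j k =>
      if j = k then 0 else ((lam j + lam k) / (lam j - lam k)) * (ψ j ⬝ᵥ (D *ᵥ ψ k))
    letI Jtilde : Matrix (Fin d) (Fin d) ℝ := Ψ * Jhat * Ψᵀ
    letI Q : Matrix (Fin d) (Fin d) ℝ := Ψ * Matrix.diagonal lam * Ψᵀ
    Q.PosDef ∧
      Jtilde * Q - Q * Jtilde = -(Q * D) - D * Q + (2 * (D.trace / d)) • Q :=
  lyapunov_equation_for_Q_general D ψ hortho hequi lam hpos hmono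
end

section
/- Let c > 1, d ≥ 2, λ_k := (d−1)/(c²−1) + (k−1) for k = 1,...,d, and let Ĵ be the antisymmetric d×d matrix with entries Ĵ_{jk} = ((λ_j+λ_k)/(λ_j−λ_k))·λ·(1/d)·d = λ(λ_j+λ_k)/(λ_j−λ_k)·(α_j α_k d), where α_k² = 1/d for all k and λ > 0. Then ‖Ĵ‖_F ≤ λ · (2π/√3) · (c²/(c²−1)) · √d · (d−1). -/
open Matrix

/-- The Frobenius norm of a real square matrix, `‖A‖_F = √(Tr(AᵀA))`. -/
noncomputable def frobNorm {d : ℕ} (A : Matrix (Fin d) (Fin d) ℝ) : ℝ :=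
  Real.sqrt ((Aᵀ * A).trace)

/-!
Since `α_j² α_k² = 1/d²`, the entry `Ĵ_{jk}` has modulus `λ (λ_j + λ_k) / |j - k|`, and
`0 ≤ λ_j + λ_k ≤ 2 (d - 1) c² / (c² - 1)`. So each row of `Ĵ` has squared norm at most
`(2 λ (d - 1) c² / (c² - 1))² · ∑_{n ≠ 0} 1/n² = (2 λ (d - 1) c² / (c² - 1))² π² / 3`,
and summing the `d` rows gives the bound.
-/

open Real Finset

lemma hasSum_one_div_int_sq : HasSum (fun z : ℤ => 1 / (z : ℝ) ^ 2) (π ^ 2 / 3) := by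
  rw [show π ^ 2 / 3 = π ^ 2 / 6 + π ^ 2 / 6 - 1 / ((0 : ℤ) : ℝ) ^ 2 by simp; ring]
  exact .of_nat_of_neg (by simpa using hasSum_zeta_two) (by simpa using hasSum_zeta_two)

lemma sum_one_div_sq_le_of_injOn {ι : Type*} (s : Finset ι) (f : ι → ℤ)
    (hf : Set.InjOn f s) :
    ∑ i ∈ s, 1 / (f i : ℝ) ^ 2 ≤ π ^ 2 / 3 := by
  rw [← sum_image (f := fun z : ℤ => 1 / (z : ℝ) ^ 2) hf]
  exact sum_le_hasSum _ (fun _ _ => by positivity) hasSum_one_div_int_sq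

lemma sum_one_div_sub_sq_le {d : ℕ} (j : Fin d) :
    ∑ k : Fin d, 1 / ((j : ℝ) - k) ^ 2 ≤ π ^ 2 / 3 := by
  have hinj : Set.InjOn (fun k : Fin d => (j : ℤ) - k) (univ : Finset (Fin d)) :=
    fun a _ b _ h => by
      simp only [sub_right_inj, Nat.cast_inj] at h
      exact Fin.ext h
  simpa using sum_one_div_sq_le_of_injOn univ _ hinj

lemma frobNorm_eq_sqrt_sum_sq {d : ℕ} (A : Matrix (Fin d) (Fin d) ℝ) :
    frobNorm A = √(∑ j, ∑ k, A j k ^ 2) := by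
  rw [frobNorm, sum_comm]
  simp only [trace, diag_apply, mul_apply, transpose_apply, sq]

lemma frobNorm_le_of_sq_le_div_sub_sq {d : ℕ} (A : Matrix (Fin d) (Fin d) ℝ) {C : ℝ}
    (hC : 0 ≤ C) (hdiag : ∀ j, A j j = 0)
    (hA : ∀ j k, j ≠ k → A j k ^ 2 ≤ C ^ 2 / ((j : ℝ) - k) ^ 2) :
    frobNorm A ≤ √d * (π / √3) * C := by
  -- at `k = j` both sides vanish, the right one because `x / 0 = 0`
  have hentry : ∀ j k, A j k ^ 2 ≤ C ^ 2 * (1 / ((j : ℝ) - k) ^ 2) := by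
    intro j k
    obtain rfl | hjk := eq_or_ne j k
    · simp [hdiag]
    · rw [← div_eq_mul_one_div]
      exact hA j k hjk
  have hrow : ∀ j, ∑ k, A j k ^ 2 ≤ C ^ 2 * (π ^ 2 / 3) := fun j =>
    calc ∑ k, A j k ^ 2 ≤ ∑ k : Fin d, C ^ 2 * (1 / ((j : ℝ) - k) ^ 2) :=
          sum_le_sum fun k _ => hentry j k
      _ = C ^ 2 * ∑ k : Fin d, 1 / ((j : ℝ) - k) ^ 2 := (mul_sum ..).symm
      _ ≤ C ^ 2 * (π ^ 2 / 3) := by gcongr; exact sum_one_div_sub_sq_le j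
  have hbound : √d * (π / √3) * C = √(d * (C ^ 2 * (π ^ 2 / 3))) := by
    rw [sqrt_mul' _ (by positivity), sqrt_mul' _ (by positivity), sqrt_sq hC,
      sqrt_div' _ (by norm_num), sqrt_sq pi_pos.le]
    ring
  rw [frobNorm_eq_sqrt_sum_sq, hbound]
  gcongr
  simpa using sum_le_sum fun j (_ : j ∈ univ) => hrow j

theorem frobenius_bound_Jhat_general {d : ℕ} (c : ℝ) (hc : 1 < c)
    (lam0 : ℝ) (hlam0 : 0 < lam0) (α : Fin d → ℝ) (hα : ∀ k, α k ^ 2 = 1 / (d : ℝ)) :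
    letI lam : Fin d → ℝ := fun k => ((d : ℝ) - 1) / (c ^ 2 - 1) + (k : ℝ)
    letI Jhat : Matrix (Fin d) (Fin d) ℝ := Matrix.of fun j k =>
      if j = k then 0 else
        ((lam j + lam k) / (lam j - lam k)) * ((d : ℝ) * lam0 * α j * α k)
    frobNorm Jhat ≤
      lam0 * (2 * Real.pi / Real.sqrt 3) * (c ^ 2 / (c ^ 2 - 1)) *
        Real.sqrt d * ((d : ℝ) - 1) := by
  obtain rfl | hd := Nat.eq_zero_or_pos d
  · simp [frobNorm]
  set lam : Fin d → ℝ := fun k => ((d : ℝ) - 1) / (c ^ 2 - 1) + (k : ℝ)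
  set Jhat : Matrix (Fin d) (Fin d) ℝ := Matrix.of fun j k =>
    if j = k then 0 else ((lam j + lam k) / (lam j - lam k)) * ((d : ℝ) * lam0 * α j * α k)
  have hc2 : 0 < c ^ 2 - 1 := by nlinarith
  have hd1 : (0 : ℝ) ≤ d - 1 := sub_nonneg.2 (Nat.one_le_cast.2 hd)
  set M := ((d : ℝ) - 1) / (c ^ 2 - 1) + ((d : ℝ) - 1) with hM
  have hlam_le : ∀ k, lam k ≤ M := fun k => by
    have hk : (k : ℝ) + 1 ≤ d := by exact_mod_cast k.isLt
    simp only [lam, hM]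
    linarith
  have hJ : ∀ j k, j ≠ k → Jhat j k ^ 2 ≤ (lam0 * (2 * M)) ^ 2 / ((j : ℝ) - k) ^ 2 := by
    intro j k hjk
    have hsub : lam j - lam k = (j : ℝ) - k := by simp only [lam]; ring
    have hsq : Jhat j k ^ 2 = lam0 ^ 2 * (lam j + lam k) ^ 2 / ((j : ℝ) - k) ^ 2 := by
      have hdne : (d : ℝ) ≠ 0 := by positivity
      simp only [Jhat, of_apply, if_neg hjk, hsub, mul_pow, div_pow, hα]
      field_simp
    rw [hsq, mul_pow]
    gcongr
    linarith [hlam_le j, hlam_le k]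
  calc frobNorm Jhat ≤ √d * (π / √3) * (lam0 * (2 * M)) :=
        frobNorm_le_of_sq_le_div_sub_sq Jhat (by positivity) (fun j => if_pos rfl) hJ
    _ = _ := by
        rw [hM]
        field_simp
        ring

/-- For `c > 1`, `λ_k = (d−1)/(c²−1) + (k−1)`, `α_k² = 1/d` and `λ > 0`, the antisymmetric
matrix `Ĵ` with `Ĵ_{jk} = ((λ_j+λ_k)/(λ_j−λ_k)) d λ α_j α_k` (off the diagonal) satisfies
`‖Ĵ‖_F ≤ λ (2π/√3) (c²/(c²−1)) √d (d−1)`. -/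
theorem frobenius_bound_Jhat {d : ℕ} (hd : 2 ≤ d) (c : ℝ) (hc : 1 < c)
    (lam0 : ℝ) (hlam0 : 0 < lam0) (α : Fin d → ℝ) (hα : ∀ k, α k ^ 2 = 1 / (d : ℝ)) :
    letI lam : Fin d → ℝ := fun k => ((d : ℝ) - 1) / (c ^ 2 - 1) + (k : ℝ)
    letI Jhat : Matrix (Fin d) (Fin d) ℝ := Matrix.of fun j k =>
      if j = k then 0 else
        ((lam j + lam k) / (lam j - lam k)) * ((d : ℝ) * lam0 * α j * α k)
    frobNorm Jhat ≤
      lam0 * (2 * Real.pi / Real.sqrt 3) * (c ^ 2 / (c ^ 2 - 1)) *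
        Real.sqrt d * ((d : ℝ) - 1) :=
  frobenius_bound_Jhat_general c hc lam0 hlam0 α hα
end

section
/- Let μ > 1, c := √((μ+1)/(μ−1)), and C̃ = [[2, μ], [−μ, 0]]. Then ‖e^{−C̃t}‖ ≤ c·e^{−t} for all t ≥ 0, where ‖·‖ is the spectral norm. -/
/-!
With `H = [[μ, 1], [1, μ]]` one has `C̃ᵀH + HC̃ = 2H`, so the energy `xᵀHx` decays exactly like
`e^{-2t}` along `e^{-C̃t}`: `(e^{-C̃t})ᵀ H e^{-C̃t} = e^{-2t} H`. Since `H` has eigenvalues `μ ± 1`,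
comparing the energy with the Euclidean norm costs the factor `c² = (μ + 1)/(μ - 1)`.
-/

open Matrix
open scoped Matrix.Norms.L2Operator

namespace Matrix

variable {m n : Type*} [Fintype m] [Fintype n] [DecidableEq n]

theorem transpose_exp_mul_mul_exp (A H : Matrix n n ℝ) (hH : IsUnit H) (r : ℝ)
    (h : Aᵀ * H + H * A = r • H) :
    (NormedSpace.exp A)ᵀ * H * NormedSpace.exp A = Real.exp r • H := by
  have hdet : IsUnit H.det := (isUnit_iff_isUnit_det _).mp hH
  have hconj : H * A * H⁻¹ = algebraMap ℝ _ r - Aᵀ := by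
    rw [eq_sub_of_add_eq' h, sub_mul, smul_mul_assoc, mul_nonsing_inv_cancel_right _ _ hdet,
      mul_nonsing_inv _ hdet, Algebra.algebraMap_eq_smul_one]
  have hexp : NormedSpace.exp (algebraMap ℝ (Matrix n n ℝ) r) = Real.exp r • 1 := by
    rw [← NormedSpace.algebraMap_exp_comm, Real.exp_eq_exp_ℝ, Algebra.algebraMap_eq_smul_one]
  calc (NormedSpace.exp A)ᵀ * H * NormedSpace.exp A
      = NormedSpace.exp Aᵀ * NormedSpace.exp (H * A * H⁻¹) * H := by
        rw [exp_conj _ _ hH, exp_transpose, mul_assoc, mul_assoc, mul_assoc,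
          nonsing_inv_mul _ hdet, mul_one]
    _ = Real.exp r • H := by
        rw [hconj, ← exp_add_of_commute _ _
          ((Algebra.commute_algebraMap_right r Aᵀ).sub_right (Commute.refl _)),
          add_sub_cancel, hexp, smul_one_mul]

theorem transpose_exp_smul_mul_mul_exp_smul (A H : Matrix n n ℝ) (hH : IsUnit H) (r t : ℝ)
    (h : Aᵀ * H + H * A = r • H) :
    (NormedSpace.exp (t • A))ᵀ * H * NormedSpace.exp (t • A) = Real.exp (t * r) • H :=
  transpose_exp_mul_mul_exp _ H hH _ <| by
    rw [transpose_smul, smul_mul_assoc, mul_smul_comm, ← smul_add, h, smul_smul]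

theorem l2_opNorm_le_of_dotProduct (M : Matrix m n ℝ) {K : ℝ} (hK : 0 ≤ K)
    (h : ∀ x, M *ᵥ x ⬝ᵥ M *ᵥ x ≤ K ^ 2 * (x ⬝ᵥ x)) : ‖M‖ ≤ K := by
  rw [l2_opNorm_def]
  refine ContinuousLinearMap.opNorm_le_bound _ hK fun x => ?_
  rw [← sq_le_sq₀ (norm_nonneg _) (by positivity), mul_pow, EuclideanSpace.real_norm_sq_eq,
    EuclideanSpace.real_norm_sq_eq]
  simpa [dotProduct, sq] using h x.ofLp

theorem l2_opNorm_le_of_transpose_mul_mul_eq_smul {M H : Matrix n n ℝ} {a b ρ : ℝ} (ha : 0 < a)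
    (hρ : 0 ≤ ρ) (hM : Mᵀ * H * M = ρ • H) (hlow : ∀ x, a * (x ⬝ᵥ x) ≤ x ⬝ᵥ H *ᵥ x)
    (hup : ∀ x, x ⬝ᵥ H *ᵥ x ≤ b * (x ⬝ᵥ x)) : ‖M‖ ≤ √(ρ * b / a) := by
  refine l2_opNorm_le_of_dotProduct M (Real.sqrt_nonneg _) fun x => ?_
  have henergy : M *ᵥ x ⬝ᵥ H *ᵥ (M *ᵥ x) = ρ * (x ⬝ᵥ H *ᵥ x) := by
    nth_rw 1 [← vecMul_transpose]
    rw [← dotProduct_mulVec, mulVec_mulVec, mulVec_mulVec, hM, smul_mulVec, dotProduct_smul,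
      smul_eq_mul]
  have hx : 0 ≤ x ⬝ᵥ x := by simpa using dotProduct_star_self_nonneg x
  calc M *ᵥ x ⬝ᵥ M *ᵥ x ≤ ρ * b / a * (x ⬝ᵥ x) := by
        rw [div_mul_eq_mul_div, le_div_iff₀ ha, mul_comm, mul_assoc]
        calc a * (M *ᵥ x ⬝ᵥ M *ᵥ x) ≤ ρ * (x ⬝ᵥ H *ᵥ x) := henergy ▸ hlow _
          _ ≤ ρ * (b * (x ⬝ᵥ x)) := mul_le_mul_of_nonneg_left (hup x) hρ
    _ ≤ √(ρ * b / a) ^ 2 * (x ⬝ᵥ x) :=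
        mul_le_mul_of_nonneg_right (Real.sq_sqrt' ▸ le_max_left _ _) hx

theorem fin_two_transpose_mul_add_mul_eq_two_smul (μ : ℝ) :
    (!![2, μ; -μ, 0] : Matrix (Fin 2) (Fin 2) ℝ)ᵀ * !![μ, 1; 1, μ] +
      !![μ, 1; 1, μ] * !![2, μ; -μ, 0] = (2 : ℝ) • !![μ, 1; 1, μ] := by
  ext i j
  fin_cases i <;> fin_cases j <;> simp [mul_apply, Fin.sum_univ_two] <;> ring

theorem isUnit_fin_two_of_one_lt {μ : ℝ} (hμ : 1 < μ) :
    IsUnit (!![μ, 1; 1, μ] : Matrix (Fin 2) (Fin 2) ℝ) := by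
  rw [isUnit_iff_isUnit_det, det_fin_two_of, isUnit_iff_ne_zero]
  nlinarith

theorem le_dotProduct_mulVec_fin_two (μ : ℝ) (x : Fin 2 → ℝ) :
    (μ - 1) * (x ⬝ᵥ x) ≤ x ⬝ᵥ !![μ, 1; 1, μ] *ᵥ x := by
  simp only [dotProduct, mulVec, Fin.sum_univ_two, of_apply, cons_val', cons_val_zero,
    cons_val_one, empty_val', cons_val_fin_one]
  nlinarith [sq_nonneg (x 0 + x 1)]

theorem dotProduct_mulVec_fin_two_le (μ : ℝ) (x : Fin 2 → ℝ) :
    x ⬝ᵥ !![μ, 1; 1, μ] *ᵥ x ≤ (μ + 1) * (x ⬝ᵥ x) := by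
  simp only [dotProduct, mulVec, Fin.sum_univ_two, of_apply, cons_val', cons_val_zero,
    cons_val_one, empty_val', cons_val_fin_one]
  nlinarith [sq_nonneg (x 0 - x 1)]

end Matrix

/-- For `μ > 1`, `c = √((μ+1)/(μ−1))` and `C̃ = [[2, μ], [−μ, 0]]`, the spectral norm of
the matrix exponential satisfies `‖e^{−C̃t}‖ ≤ c e^{−t}` for all `t ≥ 0`. -/
theorem sharp_decay_2d (μ : ℝ) (hμ : 1 < μ) :
    letI C : Matrix (Fin 2) (Fin 2) ℝ := !![2, μ; -μ, 0]
    letI c : ℝ := Real.sqrt ((μ + 1) / (μ - 1))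
    ∀ t : ℝ, 0 ≤ t → ‖NormedSpace.exp (-(t • C))‖ ≤ c * Real.exp (-t) := by
  intro t _
  have hM := transpose_exp_smul_mul_mul_exp_smul _ _ (isUnit_fin_two_of_one_lt hμ) _ (-t)
    (fin_two_transpose_mul_add_mul_eq_two_smul μ)
  rw [← neg_smul]
  calc ‖NormedSpace.exp ((-t) • !![2, μ; -μ, 0])‖
      ≤ √(Real.exp (-t * 2) * (μ + 1) / (μ - 1)) :=
        l2_opNorm_le_of_transpose_mul_mul_eq_smul (by linarith) (Real.exp_nonneg _) hM
          (le_dotProduct_mulVec_fin_two μ) (dotProduct_mulVec_fin_two_le μ)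
    _ = √((μ + 1) / (μ - 1)) * Real.exp (-t) := by
        rw [mul_div_assoc, Real.sqrt_mul (Real.exp_nonneg _), mul_comm, mul_two, Real.exp_add,
          Real.sqrt_mul_self (Real.exp_nonneg _)]
end

section
/- Let A be a real 2×2 positive stable diagonalizable matrix with both eigenvalues having the same real part ρ > 0, and let v₁, v₂ ∈ ℂ² be corresponding eigenvectors. Set α := |⟨v₁/‖v₁‖, v₂/‖v₂‖⟩|. If α < 1, then ‖e^{−At}‖ ≤ √((1+α)/(1−α))·e^{−ρt} for all t ≥ 0. -/
open Matrix
open scoped Matrix.Norms.L2Operator ComplexInnerProductSpace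

/-!
On the eigenbasis `v₁, v₂` of the complexified matrix, `e^{-At}` acts by the scalars
`e^{-τᵢ t}`, both of modulus `e^{-ρt}`. Writing `x = a v₁ + b v₂`, the cross term of `‖x‖²` is
at most `α` times `‖a v₁‖² + ‖b v₂‖²` (Cauchy–Schwarz and AM–GM), so
`‖e^{-At} x‖² ≤ (1 + α) e^{-2ρt} (‖a v₁‖² + ‖b v₂‖²) ≤ (1 + α)/(1 - α) e^{-2ρt} ‖x‖²`.
The norm of the real matrix is at most that of its complexification.
-/

theorem ContinuousLinearMap.exp_apply_of_eq_smul {𝕂 E : Type*} [RCLike 𝕂] [NormedAddCommGroup E]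
    [NormedSpace 𝕂 E] [CompleteSpace E] (T : E →L[𝕂] E) {v : E} {c : 𝕂} (h : T v = c • v) :
    NormedSpace.exp T v = NormedSpace.exp c • v := by
  have hpow : ∀ n : ℕ, (T ^ n) v = c ^ n • v := by
    intro n
    induction n with
    | zero => simp
    | succ n ih => rw [pow_succ', mul_apply_eq_comp, ih, map_smul, h, smul_smul, ← pow_succ]
  have hT := (NormedSpace.exp_series_hasSum_exp' (𝕂 := 𝕂) T).mapL (apply 𝕂 E v)
  have hc := (NormedSpace.exp_series_hasSum_exp' (𝕂 := 𝕂) c).smul_const v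
  simp only [apply_apply, _root_.smul_apply, hpow, smul_smul] at hT
  exact hT.unique hc

section InnerProduct

variable {𝕜 E : Type*} [RCLike 𝕜] [NormedAddCommGroup E] [InnerProductSpace 𝕜 E]

theorem abs_norm_add_sq_sub_le_of_norm_inner_le {u w : E} {α : ℝ} (hα0 : 0 ≤ α)
    (h : ‖inner 𝕜 u w‖ ≤ α * (‖u‖ * ‖w‖)) :
    |‖u + w‖ ^ 2 - (‖u‖ ^ 2 + ‖w‖ ^ 2)| ≤ α * (‖u‖ ^ 2 + ‖w‖ ^ 2) := by
  have hre : |2 * RCLike.re (inner 𝕜 u w)| ≤ 2 * (α * (‖u‖ * ‖w‖)) := by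
    rw [abs_mul, abs_two]
    gcongr
    exact (RCLike.abs_re_le_norm _).trans h
  have hamgm : 2 * (α * (‖u‖ * ‖w‖)) ≤ α * (‖u‖ ^ 2 + ‖w‖ ^ 2) := by
    nlinarith [mul_nonneg hα0 (sq_nonneg (‖u‖ - ‖w‖))]
  rw [@norm_add_sq 𝕜, show ∀ p q r : ℝ, p + q + r - (p + r) = q by intros; ring]
  exact hre.trans hamgm

theorem norm_inner_smul_smul_le {u w : E} {α : ℝ} (h : ‖inner 𝕜 u w‖ ≤ α * (‖u‖ * ‖w‖))
    (a b : 𝕜) : ‖inner 𝕜 (a • u) (b • w)‖ ≤ α * (‖a • u‖ * ‖b • w‖) := by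
  rw [inner_smul_left, inner_smul_right, norm_mul, norm_mul, RCLike.norm_conj, norm_smul, norm_smul]
  calc ‖a‖ * (‖b‖ * ‖inner 𝕜 u w‖) ≤ ‖a‖ * (‖b‖ * (α * (‖u‖ * ‖w‖))) := by gcongr
    _ = α * (‖a‖ * ‖u‖ * (‖b‖ * ‖w‖)) := by ring

theorem ContinuousLinearMap.opNorm_le_of_span_pair_eigenvectors (S : E →L[𝕜] E) {u w : E}
    (hspan : Submodule.span 𝕜 {u, w} = ⊤) {c₁ c₂ : 𝕜} (hu : S u = c₁ • u) (hw : S w = c₂ • w)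
    {r : ℝ} (hc₁ : ‖c₁‖ ≤ r) (hc₂ : ‖c₂‖ ≤ r) {α : ℝ} (hα0 : 0 ≤ α) (hα1 : α < 1)
    (h : ‖inner 𝕜 u w‖ ≤ α * (‖u‖ * ‖w‖)) :
    ‖S‖ ≤ √((1 + α) / (1 - α)) * r := by
  have hr : 0 ≤ r := (norm_nonneg _).trans hc₁
  have hK : √((1 + α) / (1 - α)) ^ 2 = (1 + α) / (1 - α) := Real.sq_sqrt (by bound)
  refine S.opNorm_le_bound (by positivity) fun x ↦ ?_
  obtain ⟨a, b, rfl⟩ := Submodule.mem_span_pair.mp (hspan ▸ Submodule.mem_top : x ∈ _)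
  have hSx : S (a • u + b • w) = (c₁ * a) • u + (c₂ * b) • w := by
    rw [map_add, map_smul, map_smul, hu, hw, smul_smul, smul_smul, mul_comm a, mul_comm b]
  set p := ‖a • u‖ ^ 2 + ‖b • w‖ ^ 2
  have hq : ‖(c₁ * a) • u‖ ^ 2 + ‖(c₂ * b) • w‖ ^ 2 ≤ r ^ 2 * p := by
    calc ‖(c₁ * a) • u‖ ^ 2 + ‖(c₂ * b) • w‖ ^ 2
        = (‖c₁‖ * ‖a • u‖) ^ 2 + (‖c₂‖ * ‖b • w‖) ^ 2 := by simp only [mul_smul, norm_smul]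
      _ ≤ (r * ‖a • u‖) ^ 2 + (r * ‖b • w‖) ^ 2 := by gcongr
      _ = r ^ 2 * p := by ring
  have hlower : (1 - α) * p ≤ ‖a • u + b • w‖ ^ 2 := by
    have := abs_le.mp (abs_norm_add_sq_sub_le_of_norm_inner_le hα0 (norm_inner_smul_smul_le h a b))
    linarith
  have hupper : ‖S (a • u + b • w)‖ ^ 2 ≤ (1 + α) * (r ^ 2 * p) := by
    have := abs_le.mp
      (abs_norm_add_sq_sub_le_of_norm_inner_le hα0 (norm_inner_smul_smul_le h (c₁ * a) (c₂ * b)))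
    rw [hSx]
    nlinarith
  refine (sq_le_sq₀ (norm_nonneg _) (by positivity)).mp ?_
  rw [mul_pow, mul_pow, hK, div_mul_eq_mul_div, div_mul_eq_mul_div, le_div_iff₀ (by linarith)]
  calc ‖S (a • u + b • w)‖ ^ 2 * (1 - α) ≤ (1 + α) * r ^ 2 * ((1 - α) * p) := by
        nlinarith
    _ ≤ (1 + α) * r ^ 2 * ‖a • u + b • w‖ ^ 2 := by gcongr

end InnerProduct

theorem Module.End.span_pair_eq_top_of_hasEigenvector {K V : Type*} [Field K] [AddCommGroup V]
    [Module K V] (hV : Module.finrank K V = 2) (f : Module.End K V) {μ₁ μ₂ : K} {v₁ v₂ : V}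
    (hμ : μ₁ ≠ μ₂) (h₁ : f.HasEigenvector μ₁ v₁) (h₂ : f.HasEigenvector μ₂ v₂) :
    Submodule.span K {v₁, v₂} = ⊤ := by
  have : FiniteDimensional K V := Module.finite_of_finrank_eq_succ hV
  have hli : LinearIndependent K ![v₁, v₂] :=
    f.eigenvectors_linearIndependent' ![μ₁, μ₂]
      (by simpa [Function.Injective, Fin.forall_fin_two] using ⟨hμ, hμ.symm⟩) _
      (by simpa [Fin.forall_fin_two] using ⟨h₁, h₂⟩)
  rw [← Matrix.range_cons_cons_empty]
  exact hli.span_eq_top_of_card_eq_finrank (by simp [hV])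

theorem EuclideanSpace.norm_toLp_ofReal {n : Type*} [Fintype n] (y : n → ℝ) :
    ‖(WithLp.toLp 2 (Complex.ofReal ∘ y) : EuclideanSpace ℂ n)‖ = ‖WithLp.toLp 2 y‖ := by
  simp [EuclideanSpace.norm_eq]

theorem Matrix.l2_opNorm_le_l2_opNorm_map_ofReal {m n : Type*} [Fintype m] [Fintype n]
    [DecidableEq n] (B : Matrix m n ℝ) : ‖B‖ ≤ ‖B.map Complex.ofReal‖ := by
  refine ContinuousLinearMap.opNorm_le_bound _ (norm_nonneg _) fun x ↦ ?_
  have hmap : Complex.ofReal ∘ (B *ᵥ x.ofLp) = B.map Complex.ofReal *ᵥ (Complex.ofReal ∘ x.ofLp) :=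
    funext (RingHom.map_mulVec Complex.ofRealHom B x.ofLp)
  have := l2_opNorm_mulVec (B.map Complex.ofReal) (WithLp.toLp 2 (Complex.ofReal ∘ x.ofLp))
  change ‖WithLp.toLp 2 (B.map Complex.ofReal *ᵥ (Complex.ofReal ∘ x.ofLp))‖ ≤ _ at this
  rw [← hmap, EuclideanSpace.norm_toLp_ofReal, EuclideanSpace.norm_toLp_ofReal] at this
  exact this

theorem Matrix.map_ofReal_exp {n : Type*} [Fintype n] [DecidableEq n] (X : Matrix n n ℝ) :
    (NormedSpace.exp X).map Complex.ofReal = NormedSpace.exp (X.map Complex.ofReal) :=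
  NormedSpace.map_exp_of_mem_ball (𝕂 := ℝ) (Complex.ofRealAm.mapMatrix (m := n))
    (LinearMap.continuous_of_finiteDimensional (Complex.ofRealAm.mapMatrix (m := n)).toLinearMap) X
    ((NormedSpace.expSeries_radius_eq_top ℝ (Matrix n n ℝ)).symm ▸ edist_lt_top _ _)

theorem Matrix.toEuclideanCLM_exp {𝕜 n : Type*} [RCLike 𝕜] [Fintype n] [DecidableEq n]
    (X : Matrix n n 𝕜) :
    toEuclideanCLM (n := n) (𝕜 := 𝕜) (NormedSpace.exp X) =
      NormedSpace.exp (toEuclideanCLM (n := n) (𝕜 := 𝕜) X) :=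
  NormedSpace.map_exp_of_mem_ball (𝕂 := 𝕜) _
    (AddMonoidHomClass.isometry_of_norm _ fun Y ↦ (cstar_norm_def Y).symm).continuous X
    ((NormedSpace.expSeries_radius_eq_top 𝕜 (Matrix n n 𝕜)).symm ▸ edist_lt_top _ _)

theorem Matrix.l2_opNorm_exp_le_norm_exp_toEuclideanCLM_map_ofReal {n : Type*} [Fintype n]
    [DecidableEq n] (X : Matrix n n ℝ) :
    ‖NormedSpace.exp X‖ ≤
      ‖NormedSpace.exp (toEuclideanCLM (n := n) (𝕜 := ℂ) (X.map Complex.ofReal))‖ := by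
  rw [← toEuclideanCLM_exp, ← cstar_norm_def, ← map_ofReal_exp]
  exact l2_opNorm_le_l2_opNorm_map_ofReal _

theorem sharp_constant_2d_general (A : Matrix (Fin 2) (Fin 2) ℝ)
    (τ₁ τ₂ : ℂ) (hτ : τ₁ ≠ τ₂) (ρ : ℝ)
    (hre₁ : τ₁.re = ρ) (hre₂ : τ₂.re = ρ)
    (v₁ v₂ : EuclideanSpace ℂ (Fin 2)) (hv₁ : v₁ ≠ 0) (hv₂ : v₂ ≠ 0)
    (heig₁ : (A.map Complex.ofReal) *ᵥ v₁ = τ₁ • v₁)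
    (heig₂ : (A.map Complex.ofReal) *ᵥ v₂ = τ₂ • v₂)
    (α : ℝ) (hα : α = ‖⟪v₁, v₂⟫‖ / (‖v₁‖ * ‖v₂‖)) (hα1 : α < 1) :
    ∀ t : ℝ, 0 ≤ t →
      ‖NormedSpace.exp (-(t • A))‖ ≤
        Real.sqrt ((1 + α) / (1 - α)) * Real.exp (-ρ * t) := by
  intro t _
  set L := toEuclideanCLM (n := Fin 2) (𝕜 := ℂ) (A.map Complex.ofReal)
  have hL : ∀ {τ : ℂ} {v : EuclideanSpace ℂ (Fin 2)}, A.map Complex.ofReal *ᵥ v = τ • v →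
      L v = τ • v := fun h ↦ WithLp.ofLp_injective 2 h
  have hexp : ∀ {τ : ℂ}, τ.re = ρ → ‖Complex.exp (-(t : ℂ) * τ)‖ ≤ Real.exp (-ρ * t) := fun h ↦ by
    simp [Complex.norm_exp, h, mul_comm]
  have hS : ∀ {τ : ℂ} {v : EuclideanSpace ℂ (Fin 2)}, A.map Complex.ofReal *ᵥ v = τ • v →
      NormedSpace.exp ((-(t : ℂ)) • L) v = Complex.exp (-(t : ℂ) * τ) • v := fun h ↦ by
    rw [Complex.exp_eq_exp_ℂ]
    refine ContinuousLinearMap.exp_apply_of_eq_smul _ ?_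
    rw [_root_.smul_apply, hL h, smul_smul]
  have hspan : Submodule.span ℂ {v₁, v₂} = ⊤ :=
    Module.End.span_pair_eq_top_of_hasEigenvector (by simp) (L : Module.End ℂ _) hτ
      ⟨Module.End.mem_eigenspace_iff.mpr (hL heig₁), hv₁⟩
      ⟨Module.End.mem_eigenspace_iff.mpr (hL heig₂), hv₂⟩
  have hα0 : 0 ≤ α := hα ▸ by positivity
  have hinner : ‖⟪v₁, v₂⟫‖ ≤ α * (‖v₁‖ * ‖v₂‖) := by
    rw [hα, div_mul_cancel₀ _ (by positivity)]
  calc ‖NormedSpace.exp (-(t • A))‖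
      ≤ ‖NormedSpace.exp (toEuclideanCLM (n := Fin 2) (𝕜 := ℂ) ((-(t • A)).map Complex.ofReal))‖ :=
        l2_opNorm_exp_le_norm_exp_toEuclideanCLM_map_ofReal _
    _ = ‖NormedSpace.exp ((-(t : ℂ)) • L)‖ := by
      rw [← map_smul]
      congr 3
      ext
      simp
    _ ≤ _ := (NormedSpace.exp ((-(t : ℂ)) • L)).opNorm_le_of_span_pair_eigenvectors hspan
        (hS heig₁) (hS heig₂) (hexp hre₁) (hexp hre₂) hα0 hα1 hinner

/-- For a real `2×2` positive stable diagonalizable matrix `A` whose two (distinct) complex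
eigenvalues both have real part `ρ > 0`, with eigenvectors `v₁, v₂` and
`α = |⟨v₁/‖v₁‖, v₂/‖v₂‖⟩| < 1`, one has `‖e^{−At}‖ ≤ √((1+α)/(1−α)) e^{−ρt}` for `t ≥ 0`. -/
theorem sharp_constant_2d (A : Matrix (Fin 2) (Fin 2) ℝ)
    (τ₁ τ₂ : ℂ) (hτ : τ₁ ≠ τ₂) (ρ : ℝ) (hρ : 0 < ρ)
    (hre₁ : τ₁.re = ρ) (hre₂ : τ₂.re = ρ)
    (v₁ v₂ : EuclideanSpace ℂ (Fin 2)) (hv₁ : v₁ ≠ 0) (hv₂ : v₂ ≠ 0)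
    (heig₁ : (A.map Complex.ofReal) *ᵥ v₁ = τ₁ • v₁)
    (heig₂ : (A.map Complex.ofReal) *ᵥ v₂ = τ₂ • v₂)
    (α : ℝ) (hα : α = ‖⟪v₁, v₂⟫‖ / (‖v₁‖ * ‖v₂‖)) (hα1 : α < 1) :
    ∀ t : ℝ, 0 ≤ t →
      ‖NormedSpace.exp (-(t • A))‖ ≤
        Real.sqrt ((1 + α) / (1 - α)) * Real.exp (-ρ * t) :=
  sharp_constant_2d_general A τ₁ τ₂ hτ ρ hre₁ hre₂ v₁ v₂ hv₁ hv₂ heig₁ heig₂ α hα hα1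
end
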